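/- The satisfiability problem for LTL_{Past,m} is decidable: the predicate 'there exist a valuation V and a state a ∈ ℕ such that (V,a) ⊨ φ' is a decidable (computable) predicate on the countable set of formulas. -/

import Mathlib

/-!
Truth of `φ` at a state `a` only looks at the atoms of `φ` at the states `a, …, a + depth φ`,
where `depth` counts every `N` as one step and every `S` as `m` steps, and the semantics is
invariant under shifting a model. Hence `φ` is satisfiable iff it holds at `0` in one of finitely
many valuations on a window bounded in terms of the code of `φ`; these are enumerated as the
binary digits of the numbers below a computable bound. Truth of a code at a state in such a
valuation is primitive recursive by course-of-values recursion on (code, state) pairs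
(`Primrec.nat_omega_rec`): each step needs the values of smaller codes at boundedly many states.
-/

/-- Formulas of the language of `LTL_{Past,m}`: atoms, negation, conjunction,
`N` (next) and `S` (since). -/
inductive Formula : Type
  | atom : ℕ → Formula
  | neg : Formula → Formula
  | conj : Formula → Formula → Formula
  | next : Formula → Formula
  | since : Formula → Formula → Formula
deriving DecidableEq

namespace Formula

/-- Implication, defined as usual from `¬` and `∧`. -/
def imp (φ ψ : Formula) : Formula := .neg (.conj φ (.neg ψ))

/-- Disjunction, defined as usual from `¬` and `∧`. -/
def disj (φ ψ : Formula) : Formula := .neg (.conj (.neg φ) (.neg ψ))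

/-- The constant true formula `⊤`, defined as usual. -/
def top : Formula := imp (.atom 0) (.atom 0)

/-- `□φ` abbreviates `¬(⊤ S ¬φ)`. -/
def box (φ : Formula) : Formula := .neg (.since top (.neg φ))

end Formula

/-- Truth of a formula at a state `a : ℕ` in a model given by a valuation
`V : ℕ → Set ℕ`, in the bounded (measure of intransitivity `m`) semantics. -/
def Sat (m : ℕ) (V : ℕ → Set ℕ) : Formula → ℕ → Prop
  | .atom i, a => a ∈ V i
  | .neg φ, a => ¬ Sat m V φ a
  | .conj φ ψ, a => Sat m V φ a ∧ Sat m V ψ a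
  | .next φ, a => Sat m V φ (a + 1)
  | .since φ ψ, a =>
      ∃ b, a ≤ b ∧ b ≤ a + m ∧ Sat m V ψ b ∧ ∀ c, a ≤ c → c < b → Sat m V φ c

/-- A formula is valid in a model `V` if it is true at every state. -/
def ValidIn (m : ℕ) (V : ℕ → Set ℕ) (φ : Formula) : Prop := ∀ a : ℕ, Sat m V φ a

/-- The logic `LTL_{Past,m}`: the set of formulas valid in every model. -/
def Logic (m : ℕ) : Set Formula := { φ | ∀ V : ℕ → Set ℕ, ValidIn m V φ }

/-- Truth at a state in the unbounded (transitive) semantics of `LTL`. -/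
def SatU (V : ℕ → Set ℕ) : Formula → ℕ → Prop
  | .atom i, a => a ∈ V i
  | .neg φ, a => ¬ SatU V φ a
  | .conj φ ψ, a => SatU V φ a ∧ SatU V ψ a
  | .next φ, a => SatU V φ (a + 1)
  | .since φ ψ, a =>
      ∃ b, a ≤ b ∧ SatU V ψ b ∧ ∀ c, a ≤ c → c < b → SatU V φ c

/-- The transitive logic `LTL`: formulas true at every state of every model in
the unbounded semantics. -/
def LogicU : Set Formula := { φ | ∀ (V : ℕ → Set ℕ) (a : ℕ), SatU V φ a }

/-- Truth at a state in the non-uniformly non-transitive semantics, where the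
reach of `S` at state `a` is bounded by `f a` for a bound function `f`. -/
def SatB (f : ℕ → ℕ) (V : ℕ → Set ℕ) : Formula → ℕ → Prop
  | .atom i, a => a ∈ V i
  | .neg φ, a => ¬ SatB f V φ a
  | .conj φ ψ, a => SatB f V φ a ∧ SatB f V ψ a
  | .next φ, a => SatB f V φ (a + 1)
  | .since φ ψ, a =>
      ∃ b, a ≤ b ∧ b ≤ f a ∧ SatB f V ψ b ∧ ∀ c, a ≤ c → c < b → SatB f V φ c

/-- The non-uniformly non-transitive logic `LTL_{Past}`: formulas true at every
state of every model over every bound function. -/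
def LogicPast : Set Formula :=
  { φ | ∀ f : ℕ → ℕ, (∀ i, i < f i) → (∀ i, f i < f (i + 1)) →
      ∀ (V : ℕ → Set ℕ) (a : ℕ), SatB f V φ a }

/-- Substitutions map atoms to formulas and extend homomorphically. -/
def substF (σ : ℕ → Formula) : Formula → Formula
  | .atom i => σ i
  | .neg φ => .neg (substF σ φ)
  | .conj φ ψ => .conj (substF σ φ) (substF σ ψ)
  | .next φ => .next (substF σ φ)
  | .since φ ψ => .since (substF σ φ) (substF σ ψ)

/-- An inference rule: a finite list of premises and a conclusion. -/
structure Rule : Type where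
  premises : List Formula
  conclusion : Formula
deriving DecidableEq

/-- A rule is valid in a model `V` if validity of all premises in `V` implies
validity of the conclusion in `V`. -/
def RuleValid (m : ℕ) (V : ℕ → Set ℕ) (r : Rule) : Prop :=
  (∀ φ ∈ r.premises, ValidIn m V φ) → ValidIn m V r.conclusion

/-- A rule is admissible in `LTL_{Past,m}` if every substitution making all
premises theorems also makes the conclusion a theorem. -/
def Admissible (m : ℕ) (r : Rule) : Prop :=
  ∀ σ : ℕ → Formula,
    (∀ φ ∈ r.premises, substF σ φ ∈ Logic m) → substF σ r.conclusion ∈ Logic m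

/-- Admissibility in the transitive logic `LTL`. -/
def AdmissibleU (r : Rule) : Prop :=
  ∀ σ : ℕ → Formula,
    (∀ φ ∈ r.premises, substF σ φ ∈ LogicU) → substF σ r.conclusion ∈ LogicU

/-- The number of symbols in a formula. -/
def sizeF : Formula → ℕ
  | .atom _ => 1
  | .neg φ => sizeF φ + 1
  | .conj φ ψ => sizeF φ + sizeF ψ + 1
  | .next φ => sizeF φ + 1
  | .since φ ψ => sizeF φ + sizeF ψ + 1

/-- The number of symbols in a rule. -/
def ruleSize (r : Rule) : ℕ :=
  (r.premises.map sizeF).sum + sizeF r.conclusion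

/-- An (injective) numerical encoding of formulas. -/
def encF : Formula → ℕ
  | .atom i => 5 * i
  | .neg φ => 5 * encF φ + 1
  | .conj φ ψ => 5 * Nat.pair (encF φ) (encF ψ) + 2
  | .next φ => 5 * encF φ + 3
  | .since φ ψ => 5 * Nat.pair (encF φ) (encF ψ) + 4

/-- An (injective) numerical encoding of rules. -/
def encR (r : Rule) : ℕ :=
  Nat.pair (Encodable.encode (r.premises.map encF)) (encF r.conclusion)

/-- `lit true φ = φ` and `lit false φ = ¬φ`. -/
def lit (t : Bool) (φ : Formula) : Formula := if t then φ else .neg φ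

/-- Conjunction of a list of formulas. -/
def bigConj : List Formula → Formula
  | [] => Formula.top
  | [φ] => φ
  | φ :: ψ :: rest => .conj φ (bigConj (ψ :: rest))

/-- Disjunction of a list of formulas. -/
def bigDisj : List Formula → Formula
  | [] => .neg Formula.top
  | [φ] => φ
  | φ :: ψ :: rest => Formula.disj φ (bigDisj (ψ :: rest))

/-- A single disjunct of a reduced normal form over variables `x_1,…,x_n`
(the atoms `0,…,n-1`): for each `i` a literal over `x_i`, for each `i` a
literal over `N x_i`, and for each pair `i ≠ k` a literal over `x_i S x_k`. -/
def disjunct (n : ℕ) (t0 t1 : Fin n → Bool) (t2 : Fin n → Fin n → Bool) : Formula :=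
  bigConj
    (((List.finRange n).map fun i => lit (t0 i) (.atom i)) ++
     ((List.finRange n).map fun i => lit (t1 i) (.next (.atom i))) ++
     ((List.finRange n).flatMap fun i =>
        ((List.finRange n).filter fun k => k != i).map fun k =>
          lit (t2 i k) (.since (.atom i) (.atom k))))

/-- A rule is in reduced normal form if it has the shape `ε / x_1`, where `ε`
is a disjunction of disjuncts as above. -/
def IsRNF (r : Rule) : Prop :=
  ∃ n : ℕ, 0 < n ∧
    ∃ ds : List ((Fin n → Bool) × (Fin n → Bool) × (Fin n → Fin n → Bool)),
      ds ≠ [] ∧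
      r.premises = [bigDisj (ds.map fun d => disjunct n d.1 d.2.1 d.2.2)] ∧
      r.conclusion = .atom 0

/-- Boolean formulas built from argument places `p_1,…,p_n, q_1,…,q_k` using
only the Boolean connectives `¬` and `∧`. -/
inductive BForm (n k : ℕ) : Type
  | pvar : Fin n → BForm n k
  | qvar : Fin k → BForm n k
  | neg : BForm n k → BForm n k
  | conj : BForm n k → BForm n k → BForm n k

/-- Substitute formulas for the argument places of a Boolean formula. -/
def BForm.substB {n k : ℕ} (α : Fin n → Formula) (δ : Fin k → Formula) :
    BForm n k → Formula
  | .pvar i => α i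
  | .qvar j => δ j
  | .neg φ => Formula.neg (BForm.substB α δ φ)
  | .conj φ ψ => Formula.conj (BForm.substB α δ φ) (BForm.substB α δ ψ)

namespace Formula

def depth (m : ℕ) : Formula → ℕ
  | atom _ => 0
  | neg φ => φ.depth m
  | conj φ ψ => max (φ.depth m) (ψ.depth m)
  | next φ => φ.depth m + 1
  | since φ ψ => max (φ.depth m) (ψ.depth m) + m

def atoms : Formula → Finset ℕ
  | atom i => {i}
  | neg φ => φ.atoms
  | conj φ ψ => φ.atoms ∪ ψ.atoms
  | next φ => φ.atoms
  | since φ ψ => φ.atoms ∪ ψ.atoms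

theorem le_encF_of_mem_atoms {i : ℕ} : ∀ {φ : Formula}, i ∈ φ.atoms → i ≤ encF φ
  | atom j, h => by simp only [atoms, Finset.mem_singleton] at h; simp only [encF]; omega
  | neg φ, h => by have := le_encF_of_mem_atoms (φ := φ) h; simp only [encF]; omega
  | next φ, h => by have := le_encF_of_mem_atoms (φ := φ) h; simp only [encF]; omega
  | conj φ ψ, h | since φ ψ, h => by
    have := Nat.left_le_pair (encF φ) (encF ψ)
    have := Nat.right_le_pair (encF φ) (encF ψ)
    rcases Finset.mem_union.1 h with h | h
    · have := le_encF_of_mem_atoms h; simp only [encF]; omega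
    · have := le_encF_of_mem_atoms h; simp only [encF]; omega

theorem depth_le_mul_encF (m : ℕ) : ∀ φ : Formula, φ.depth m ≤ (m + 1) * encF φ
  | atom _ => by simp [depth]
  | neg φ | next φ => by
    have := depth_le_mul_encF m φ
    simp only [depth, encF]; nlinarith
  | conj φ ψ | since φ ψ => by
    have hφ := (depth_le_mul_encF m φ).trans
      (Nat.mul_le_mul_left (m + 1) (Nat.left_le_pair (encF φ) (encF ψ)))
    have hψ := (depth_le_mul_encF m ψ).trans
      (Nat.mul_le_mul_left (m + 1) (Nat.right_le_pair (encF φ) (encF ψ)))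
    simp only [depth, encF, Nat.mul_add, Nat.mul_left_comm (m + 1) 5]
    omega

end Formula

open Formula

section Semantics

variable {m : ℕ} {V : ℕ → Set ℕ}

theorem sat_since_iff {φ ψ : Formula} {a : ℕ} :
    Sat m V (.since φ ψ) a ↔
      ∃ k < m + 1, Sat m V ψ (a + k) ∧ ∀ j < k, Sat m V φ (a + j) := by
  constructor
  · rintro ⟨b, hab, hbm, hψ, hφ⟩
    exact ⟨b - a, by omega, by rwa [Nat.add_sub_cancel' hab],
      fun j hj => hφ _ (by omega) (by omega)⟩
  · rintro ⟨k, hk, hψ, hφ⟩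
    refine ⟨a + k, by omega, by omega, hψ, fun c hac hcb => ?_⟩
    simpa [Nat.add_sub_cancel' hac] using hφ (c - a) (by omega)

theorem sat_congr {V' : ℕ → Set ℕ} : ∀ {φ : Formula} {a : ℕ},
    (∀ i ∈ φ.atoms, ∀ b, a ≤ b → b ≤ a + φ.depth m → (b ∈ V i ↔ b ∈ V' i)) →
    (Sat m V φ a ↔ Sat m V' φ a)
  | atom i, a, h => h i (by simp [atoms]) a le_rfl (by omega)
  | neg φ, a, h => not_congr (sat_congr h)
  | conj φ ψ, a, h => and_congr
      (sat_congr fun i hi b h₁ h₂ =>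
        h i (by simp [atoms, hi]) b h₁ (by simp only [depth]; omega))
      (sat_congr fun i hi b h₁ h₂ =>
        h i (by simp [atoms, hi]) b h₁ (by simp only [depth]; omega))
  | next φ, a, h => sat_congr (φ := φ) (a := a + 1) fun i hi b h₁ h₂ =>
      h i hi b (by omega) (by simp only [depth]; omega)
  | since φ ψ, a, h => by
    simp only [sat_since_iff]
    refine exists_congr fun k => and_congr_right fun hk => and_congr
      (sat_congr fun i hi b h₁ h₂ => h i (by simp [atoms, hi]) b (by omega) ?_)
      (forall₂_congr fun j hj => sat_congr fun i hi b h₁ h₂ =>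
        h i (by simp [atoms, hi]) b (by omega) ?_)
    all_goals simp only [depth]; omega

theorem sat_shift (k : ℕ) (φ : Formula) (a : ℕ) :
    Sat m (fun i => {b | b + k ∈ V i}) φ a ↔ Sat m V φ (a + k) := by
  induction φ generalizing a with
  | atom i => rfl
  | neg φ ih => exact not_congr (ih a)
  | conj φ ψ ihφ ihψ => exact and_congr (ihφ a) (ihψ a)
  | next φ ih => simp only [Sat, ih, Nat.add_right_comm]
  | since φ ψ ihφ ihψ => simp only [sat_since_iff, ihφ, ihψ, Nat.add_right_comm]

end Semantics

theorem exists_lt_two_pow_testBit_iff {K : ℕ} (s : Finset ℕ) (hs : ∀ k ∈ s, k < K) :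
    ∃ w < 2 ^ K, ∀ k, w.testBit k = true ↔ k ∈ s :=
  ⟨∑ k ∈ s, 2 ^ k, Nat.geomSum_lt le_rfl hs, fun k => by
    rw [← Nat.mem_bitIndices, ← List.mem_toFinset, Finset.toFinset_bitIndices_sum_two_pow]⟩

def bitValuation (w : ℕ) : ℕ → Set ℕ := fun i => {a | w.testBit (Nat.pair i a)}

theorem exists_bitValuation_eqOn (V : ℕ → Set ℕ) (n D : ℕ) :
    ∃ w < 2 ^ Nat.pair n (D + 1), ∀ i < n, ∀ b ≤ D,
      (b ∈ bitValuation w i ↔ b ∈ V i) := by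
  classical
  let s := ((Finset.range n ×ˢ Finset.range (D + 1)).filter fun p => p.2 ∈ V p.1).image
    fun p => Nat.pair p.1 p.2
  have hs : ∀ k ∈ s, k < Nat.pair n (D + 1) := by
    simp only [s, Finset.mem_image, Finset.mem_filter, Finset.mem_product, Finset.mem_range]
    rintro _ ⟨⟨i, b⟩, ⟨⟨hi, hb⟩, -⟩, rfl⟩
    exact (Nat.pair_lt_pair_right i hb).trans (Nat.pair_lt_pair_left _ hi)
  obtain ⟨w, hw, hbit⟩ := exists_lt_two_pow_testBit_iff s hs
  refine ⟨w, hw, fun i hi b hb => ?_⟩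
  simp [bitValuation, hbit, s, hi, hb]

theorem satisfiable_iff_exists_bitValuation {m n D : ℕ} {φ : Formula}
    (hn : ∀ i ∈ φ.atoms, i < n) (hD : φ.depth m ≤ D) :
    (∃ V a, Sat m V φ a) ↔ ∃ w < 2 ^ Nat.pair n (D + 1), Sat m (bitValuation w) φ 0 := by
  refine ⟨fun ⟨V, a, h⟩ => ?_, fun ⟨w, _, h⟩ => ⟨_, 0, h⟩⟩
  obtain ⟨w, hw, hV⟩ := exists_bitValuation_eqOn (fun i => {b | b + a ∈ V i}) n D
  refine ⟨w, hw, (sat_congr fun i hi b _ hb => hV i (hn i hi) b (by omega)).2 ?_⟩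
  rwa [sat_shift, Nat.zero_add]

def decodeFormula (c : ℕ) : Formula :=
  if c % 5 = 0 then .atom (c / 5)
  else if c % 5 = 1 then .neg (decodeFormula (c / 5))
  else if c % 5 = 2 then .conj (decodeFormula (c / 5).unpair.1) (decodeFormula (c / 5).unpair.2)
  else if c % 5 = 3 then .next (decodeFormula (c / 5))
  else .since (decodeFormula (c / 5).unpair.1) (decodeFormula (c / 5).unpair.2)
decreasing_by
  all_goals first
    | omega
    | exact (Nat.unpair_left_le _).trans_lt (by omega)
    | exact (Nat.unpair_right_le _).trans_lt (by omega)

theorem decodeFormula_encF (φ : Formula) : decodeFormula (encF φ) = φ := by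
  induction φ <;> rw [decodeFormula] <;> simp [encF, Nat.mul_add_div, *]

theorem encF_decodeFormula (c : ℕ) : encF (decodeFormula c) = c := by
  induction c using Nat.strong_induction_on with
  | _ c ih =>
  rw [decodeFormula]
  split_ifs with h0
  · simp only [encF]; omega
  all_goals
    have hc : c / 5 < c := by omega
    simp only [encF, ih _ hc, ih _ ((Nat.unpair_left_le _).trans_lt hc),
      ih _ ((Nat.unpair_right_le _).trans_lt hc), Nat.pair_unpair]
    omega

section Evaluation

variable (m : ℕ)

/-- The (subformula code, state) pairs whose truth values `satStep` needs to evaluate code `c` at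
state `a`; for `φ S ψ` these are `ψ` at `a, …, a + m` followed by `φ` at `a, …, a + m`. -/
def satDeps (c a : ℕ) : List (ℕ × ℕ) :=
  if c % 5 = 0 then []
  else if c % 5 = 1 then [(c / 5, a)]
  else if c % 5 = 2 then [((c / 5).unpair.1, a), ((c / 5).unpair.2, a)]
  else if c % 5 = 3 then [(c / 5, a + 1)]
  else (List.range (m + 1)).map (fun k => ((c / 5).unpair.2, a + k)) ++
    (List.range (m + 1)).map (fun k => ((c / 5).unpair.1, a + k))

def satStep (w c a : ℕ) (r : List Bool) : Bool :=
  if c % 5 = 0 then w.testBit (Nat.pair (c / 5) a)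
  else if c % 5 = 1 then !r.getD 0 false
  else if c % 5 = 2 then r.getD 0 false && r.getD 1 false
  else if c % 5 = 3 then r.getD 0 false
  else decide (∃ k < m + 1, r.getD k false = true ∧ ∀ j < k, r.getD (m + 1 + j) false = true)

-- Primitive recursiveness is extensional, so a classical `decide` is harmless here.
open Classical in
noncomputable def satCode (w : ℕ) (x : ℕ × ℕ) : Bool :=
  decide (Sat m (bitValuation w) (decodeFormula x.1) x.2)

variable {m}

theorem fst_lt_of_mem_satDeps {c a : ℕ} {y : ℕ × ℕ} (h : y ∈ satDeps m c a) : y.1 < c := by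
  unfold satDeps at h
  split_ifs at h with h0
  · simp at h
  all_goals
    have hc : c / 5 < c := by omega
    have := (Nat.unpair_left_le (c / 5)).trans_lt hc
    have := (Nat.unpair_right_le (c / 5)).trans_lt hc
    simp only [List.mem_cons, List.mem_append, List.mem_map, List.mem_range,
      List.not_mem_nil, or_false] at h
    aesop

open Classical in
theorem satCode_eq_true {w c a : ℕ} :
    satCode m w (c, a) = true ↔ Sat m (bitValuation w) (decodeFormula c) a :=
  decide_eq_true_iff

theorem satStep_satDeps (w c a : ℕ) :
    satStep m w c a ((satDeps m c a).map (satCode m w)) = satCode m w (c, a) := by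
  unfold satStep satDeps
  rw [Bool.eq_iff_iff, satCode_eq_true, decodeFormula]
  split_ifs with h0 h1 h2 h3
  · simp [Sat, bitValuation]
  · simp [Sat, ← satCode_eq_true]
  · simp [Sat, ← satCode_eq_true]
  · simp [Sat, ← satCode_eq_true]
  rw [decide_eq_true_iff, sat_since_iff]
  refine exists_congr fun k => and_congr_right fun hk =>
    and_congr ?_ (forall₂_congr fun j hj => ?_)
  · simp [List.getD_eq_getElem?_getD, List.getElem?_append_left, hk, satCode_eq_true]
  · simp [List.getD_eq_getElem?_getD, show j < m + 1 by omega, satCode_eq_true]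

end Evaluation

section Computability

open Primrec

theorem primrec_pow : Primrec₂ fun a b : ℕ => a ^ b :=
  Primrec₂.unpaired'.1 Nat.Primrec.pow

theorem primrec_testBit : Primrec₂ Nat.testBit :=
  ((Primrec.eq.comp (nat_mod.comp (nat_div.comp fst (primrec_pow.comp (const 2) snd)) (const 2))
    (const 1)).decide.of_eq fun _ => Nat.testBit_eq_decide_div_mod_eq.symm).to₂

theorem primrec_satDeps (m : ℕ) : Primrec fun x : ℕ × ℕ => satDeps m x.1 x.2 := by
  have hq : Primrec fun x : ℕ × ℕ => x.1 / 5 := nat_div.comp fst (const 5)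
  have hl : Primrec fun x : ℕ × ℕ => (x.1 / 5).unpair.1 := fst.comp (unpair.comp hq)
  have hr : Primrec fun x : ℕ × ℕ => (x.1 / 5).unpair.2 := snd.comp (unpair.comp hq)
  have hcase (r : ℕ) : PrimrecPred fun x : ℕ × ℕ => x.1 % 5 = r :=
    Primrec.eq.comp (nat_mod.comp fst (const 5)) (const r)
  have hwindow {f : ℕ × ℕ → ℕ} (hf : Primrec f) :
      Primrec fun x : ℕ × ℕ => (List.range (m + 1)).map fun k => (f x, x.2 + k) :=
    list_map (const _) ((hf.comp fst).pair (nat_add.comp (snd.comp fst) snd)).to₂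
  unfold satDeps
  exact ite (hcase 0) (const [])
    (ite (hcase 1) (list_cons.comp (hq.pair snd) (const []))
    (ite (hcase 2) (list_cons.comp (hl.pair snd) (list_cons.comp (hr.pair snd) (const [])))
    (ite (hcase 3) (list_cons.comp (hq.pair (succ.comp snd)) (const []))
      (list_append.comp (hwindow hr) (hwindow hl)))))

theorem primrec_satStep (m : ℕ) :
    Primrec fun p : ℕ × (ℕ × ℕ) × List Bool => satStep m p.1 p.2.1.1 p.2.1.2 p.2.2 := by
  have hc : Primrec fun p : ℕ × (ℕ × ℕ) × List Bool => p.2.1.1 := fst.comp (fst.comp snd)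
  have ha : Primrec fun p : ℕ × (ℕ × ℕ) × List Bool => p.2.1.2 := snd.comp (fst.comp snd)
  have hres : Primrec fun p : ℕ × (ℕ × ℕ) × List Bool => p.2.2 := snd.comp snd
  have hcase (r : ℕ) : PrimrecPred fun p : ℕ × (ℕ × ℕ) × List Bool => p.2.1.1 % 5 = r :=
    Primrec.eq.comp (nat_mod.comp hc (const 5)) (const r)
  have hget (k : ℕ) : Primrec fun p : ℕ × (ℕ × ℕ) × List Bool => p.2.2.getD k false :=
    (list_getD false).comp hres (const k)
  have hψ : PrimrecRel fun (k : ℕ) (r : List Bool) => r.getD k false = true :=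
    Primrec.eq.comp ((list_getD false).comp snd fst) (const true)
  have hφ : PrimrecRel fun (j : ℕ) (r : List Bool) => r.getD (m + 1 + j) false = true :=
    Primrec.eq.comp ((list_getD false).comp snd (nat_add.comp (const (m + 1)) fst)) (const true)
  have hall : PrimrecRel fun (k : ℕ) (r : List Bool) =>
      ∀ j < k, r.getD (m + 1 + j) false = true :=
    (hφ.forall_mem_list.comp (list_range.comp fst) snd).of_eq (by simp)
  have hstep : PrimrecRel fun (k : ℕ) (r : List Bool) =>
      r.getD k false = true ∧ ∀ j < k, r.getD (m + 1 + j) false = true :=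
    PrimrecPred.and hψ hall
  have hsince : PrimrecPred fun p : ℕ × (ℕ × ℕ) × List Bool =>
      ∃ k < m + 1, p.2.2.getD k false = true ∧ ∀ j < k, p.2.2.getD (m + 1 + j) false = true :=
    (hstep.exists_mem_list.comp (const (List.range (m + 1))) hres).of_eq (by simp)
  unfold satStep
  exact ite (hcase 0)
    (primrec_testBit.comp fst (Primrec₂.natPair.comp (nat_div.comp hc (const 5)) ha))
    (ite (hcase 1) (Primrec.not.comp (hget 0))
    (ite (hcase 2) (Primrec.and.comp (hget 0) (hget 1))
    (ite (hcase 3) (hget 0) hsince.decide)))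

theorem primrec_satCode (m : ℕ) : Primrec₂ (satCode m) :=
  nat_omega_rec (satCode m) (fst.comp snd).to₂ ((primrec_satDeps m).comp snd).to₂
    (option_some.comp (primrec_satStep m)).to₂ (fun _ _ _ => fst_lt_of_mem_satDeps)
    (fun w x => congrArg some (satStep_satDeps w x.1 x.2))

open Classical in
theorem primrec_decide_satisfiable (m : ℕ) :
    Primrec fun c => decide (∃ V a, Sat m V (decodeFormula c) a) := by
  have hbound : Primrec fun c : ℕ => 2 ^ Nat.pair (c + 1) ((m + 1) * c + 1) :=
    primrec_pow.comp (const 2) (Primrec₂.natPair.comp (succ.comp .id)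
      (succ.comp (nat_mul.comp (const (m + 1)) .id)))
  have hsat : PrimrecRel fun w c : ℕ => satCode m w (c, 0) = true :=
    Primrec.eq.comp ((primrec_satCode m).comp fst (snd.pair (const 0))) (const true)
  have hsearch : PrimrecPred fun c : ℕ =>
      ∃ w < 2 ^ Nat.pair (c + 1) ((m + 1) * c + 1), satCode m w (c, 0) = true :=
    hsat.exists_lt.comp hbound .id
  refine hsearch.decide.of_eq fun c => decide_eq_decide.2 ?_
  have hc := encF_decodeFormula c
  rw [satisfiable_iff_exists_bitValuation (n := c + 1) (D := (m + 1) * c)]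
  · simp only [satCode_eq_true]
  · exact fun i hi => Nat.lt_succ_of_le (hc ▸ le_encF_of_mem_atoms hi)
  · exact (depth_le_mul_encF m _).trans_eq (by rw [hc])

end Computability

theorem satisfiability_decidable_general (m : ℕ) :
    ∃ f : ℕ → Bool, Computable f ∧
      ∀ φ : Formula,
        ((∃ (V : ℕ → Set ℕ) (a : ℕ), Sat m V φ a) ↔ f (encF φ) = true) := by
  classical
  exact ⟨_, (primrec_decide_satisfiable m).to_comp, fun φ => by simp [decodeFormula_encF]⟩

/-- the satisfiability problem for `LTL_{Past,m}` is decidable: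
satisfiability is a computable predicate on (codes of) formulas. -/
theorem satisfiability_decidable (m : ℕ) (hm : 1 ≤ m) :
    ∃ f : ℕ → Bool, Computable f ∧
      ∀ φ : Formula,
        ((∃ (V : ℕ → Set ℕ) (a : ℕ), Sat m V φ a) ↔ f (encF φ) = true) :=
  satisfiability_decidable_general m
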